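/- arXiv:2208.03940 — 2 statements merged into one kernel-verified Lean document; each statement's English description precedes it below -/
import Mathlib

section
/- Mixed-integer reformulation of a ReLU MLP: let M > 0 be such that, for the input x ∈ ℝ^n, every forward-pass pre-activation satisfies |z^l_{n'}(x)| ≤ M for all layers l and neurons n'. Then for a real number h₀, one has h₀ = h(x) if and only if there exist vectors s^l, r^l ∈ ℝ^{N_l} and binary vectors μ^l ∈ {0,1}^{N_l} for 1 ≤ l ≤ L such that, with s^0 = x: s^l − r^l = W^l s^{l−1} + b^l, 0 ≤ s^l ≤ M μ^l, 0 ≤ r^l ≤ M(1 − μ^l) componentwise for every l, and h₀ = wᵀ s^L + b. -/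
open Matrix BigOperators

/-- A ReLU multilayer perceptron with `L + 1` hidden layers (so at least one hidden
layer), widths `N 0` (input), `N 1, …, N (L+1)` (hidden), weight matrices `W l`,
biases `b l` for each hidden layer, and output weights `w`, output bias `bOut`. -/
structure ReLUMLP (L : ℕ) where
  N : ℕ → ℕ
  W : (l : ℕ) → Matrix (Fin (N (l + 1))) (Fin (N l)) ℝ
  b : (l : ℕ) → (Fin (N (l + 1)) → ℝ)
  w : Fin (N (L + 1)) → ℝ
  bOut : ℝ

namespace ReLUMLP

variable {L : ℕ}

/-- Post-activations of the forward pass: `s 0 = x`, `s (l+1) = ReLU (W l ∘ s l + b l)`. -/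
def s (M : ReLUMLP L) (x : Fin (M.N 0) → ℝ) : (l : ℕ) → Fin (M.N l) → ℝ
  | 0 => x
  | l + 1 => fun i => max ((M.W l).mulVec (s M x l) i + M.b l i) 0

/-- Pre-activations of the forward pass: `z l = W l ∘ s l + b l` (the pre-activation of
hidden layer `l + 1`). -/
def z (M : ReLUMLP L) (x : Fin (M.N 0) → ℝ) (l : ℕ) : Fin (M.N (l + 1)) → ℝ :=
  (M.W l).mulVec (M.s x l) + M.b l

/-- Network output `h x = wᵀ s^{L+1}(x) + bOut`. -/
def h (M : ReLUMLP L) (x : Fin (M.N 0) → ℝ) : ℝ :=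
  M.w ⬝ᵥ M.s x (L + 1) + M.bOut

/-- An activation pattern: a Boolean activation state for every neuron of every hidden
layer (`true` = active, `false` = inactive). Only indices `l ≤ L` are relevant. -/
def Pattern (M : ReLUMLP L) :=
  (l : ℕ) → Fin (M.N (l + 1)) → Bool

/-- The diagonal 0/1 matrix `D^l` associated with an activation pattern. -/
def diagO (M : ReLUMLP L) (o : M.Pattern) (l : ℕ) :
    Matrix (Fin (M.N (l + 1))) (Fin (M.N (l + 1))) ℝ :=
  Matrix.diagonal fun i => if o l i then 1 else 0

/-- `Ŵ^l`, defined by `Ŵ^1 = W^1`, `Ŵ^l = W^l D^{l-1} Ŵ^{l-1}`. -/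
def What (M : ReLUMLP L) (o : M.Pattern) :
    (l : ℕ) → Matrix (Fin (M.N (l + 1))) (Fin (M.N 0)) ℝ
  | 0 => M.W 0
  | l + 1 => M.W (l + 1) * (M.diagO o l * What M o l)

/-- `b̂^l`, defined by `b̂^1 = b^1`, `b̂^l = W^l D^{l-1} b̂^{l-1} + b^l`. -/
def bhat (M : ReLUMLP L) (o : M.Pattern) : (l : ℕ) → Fin (M.N (l + 1)) → ℝ
  | 0 => M.b 0
  | l + 1 => (M.W (l + 1) * M.diagO o l).mulVec (bhat M o l) + M.b (l + 1)

/-- The affine output weight `ŵ_o = (wᵀ D^L Ŵ^L)ᵀ` of a pattern. -/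
def wHat (M : ReLUMLP L) (o : M.Pattern) : Fin (M.N 0) → ℝ :=
  Matrix.vecMul M.w (M.diagO o L * M.What o L)

/-- The affine output bias `b̂_o = wᵀ D^L b̂^L + b` of a pattern. -/
def bHat (M : ReLUMLP L) (o : M.Pattern) : ℝ :=
  M.w ⬝ᵥ (M.diagO o L).mulVec (M.bhat o L) + M.bOut

/-- The strict activation region `R_o` of a pattern `o`. -/
def region (M : ReLUMLP L) (o : M.Pattern) : Set (Fin (M.N 0) → ℝ) :=
  {x | ∀ l ≤ L, ∀ i, if o l i then 0 ≤ M.z x l i else M.z x l i < 0}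

end ReLUMLP

open Matrix ReLUMLP in
/-- Mixed-integer reformulation of a ReLU MLP. If `Mb > 0` bounds the
absolute value of every forward-pass pre-activation at the input `x`, then `h₀ = h(x)`
iff there exist vectors `σ^l`, `r^l` and binary vectors `μ^l` with `σ^0 = x`,
`σ^{l+1} - r^l = W^l σ^l + b^l`, `0 ≤ σ^{l+1} ≤ Mb μ^l`, `0 ≤ r^l ≤ Mb (1 - μ^l)`
componentwise for every hidden layer, and `h₀ = wᵀ σ^{L+1} + bOut`. -/
theorem mlp_bigM_reformulation {L : ℕ} (M : ReLUMLP L) (x : Fin (M.N 0) → ℝ)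
    (Mb : ℝ) (hMb : 0 < Mb) (hz : ∀ l ≤ L, ∀ i, |M.z x l i| ≤ Mb) (h₀ : ℝ) :
    h₀ = M.h x ↔
      ∃ σ : (l : ℕ) → Fin (M.N l) → ℝ,
      ∃ r μ : (l : ℕ) → Fin (M.N (l + 1)) → ℝ,
        σ 0 = x ∧
        (∀ l ≤ L, ∀ i,
          (μ l i = 0 ∨ μ l i = 1) ∧
          σ (l + 1) i - r l i = (M.W l).mulVec (σ l) i + M.b l i ∧
          0 ≤ σ (l + 1) i ∧ σ (l + 1) i ≤ Mb * μ l i ∧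
          0 ≤ r l i ∧ r l i ≤ Mb * (1 - μ l i)) ∧
        h₀ = M.w ⬝ᵥ σ (L + 1) + M.bOut := by
  constructor
  · intro hh
    refine ⟨fun l => M.s x l, fun l i => max (-(M.z x l i)) 0,
      fun l i => if 0 ≤ M.z x l i then 1 else 0, rfl, ?_, ?_⟩
    · intro l hl i
      have hb := hz l hl i
      have hb1 : M.z x l i ≤ Mb := (abs_le.mp hb).2
      have hb2 : -Mb ≤ M.z x l i := (abs_le.mp hb).1
      have hs : M.s x (l+1) i = max (M.z x l i) 0 := rfl
      have hzdef : M.z x l i = (M.W l).mulVec (M.s x l) i + M.b l i := rfl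
      by_cases hpos : 0 ≤ M.z x l i
      · refine ⟨Or.inr (if_pos hpos), ?_, ?_, ?_, ?_, ?_⟩ <;>
          simp only [if_pos hpos, hs, hzdef.symm, max_eq_left hpos,
            max_eq_right (neg_nonpos.mpr hpos)] <;> linarith
      · push_neg at hpos
        refine ⟨Or.inl (if_neg (not_le.mpr hpos)), ?_, ?_, ?_, ?_, ?_⟩ <;>
          simp only [if_neg (not_le.mpr hpos), hs, hzdef.symm, max_eq_right hpos.le,
            max_eq_left (neg_nonneg.mpr hpos.le)] <;> linarith
    · simpa [ReLUMLP.h] using hh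
  · rintro ⟨σ, r, μ, h0, hcon, hout⟩
    have key : ∀ l ≤ L + 1, σ l = M.s x l := by
      intro l hl
      induction l with
      | zero => simpa [ReLUMLP.s] using h0
      | succ l ih =>
        have hl' : l ≤ L := Nat.lt_succ_iff.mp hl
        have ihe := ih (le_of_lt (Nat.lt_of_lt_of_le (Nat.lt_succ_self l) hl))
        funext i
        obtain ⟨hmu, heq, hs0, hsM, hr0, hrM⟩ := hcon l hl' i
        have hzdef : M.z x l i = (M.W l).mulVec (M.s x l) i + M.b l i := rfl
        rw [ihe] at heq
        have hzeq : σ (l+1) i - r l i = M.z x l i := by rw [heq, hzdef]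
        have hs : M.s x (l+1) i = max (M.z x l i) 0 := rfl
        rcases hmu with hm | hm
        · have hsz : σ (l+1) i = 0 := le_antisymm (by simpa [hm] using hsM) hs0
          have : M.z x l i ≤ 0 := by rw [← hzeq, hsz]; linarith
          rw [hs, max_eq_right this, hsz]
        · have hrz : r l i = 0 := le_antisymm (by simpa [hm] using hrM) hr0
          have hz0 : M.z x l i = σ (l+1) i := by rw [← hzeq, hrz]; ring
          rw [hs, hz0, max_eq_left hs0]
    rw [hout, key (L+1) le_rfl, ReLUMLP.h]
end

section
/- Big-M reformulation of a union of polytopes: let K be a finite nonempty index set, and for each k ∈ K let A_k ∈ ℝ^{m_k×n} and β_k ∈ ℝ^{m_k} define the polyhedron F_k = {x ∈ ℝ^n : A_k x ≤ β_k}. Let M > 0 be such that every x ∈ ⋃_{k∈K} F_k satisfies |x_j| ≤ M for all coordinates j. Then for x ∈ ℝ^n, one has x ∈ ⋃_{k∈K} F_k if and only if there exist vectors x_k ∈ ℝ^n and scalars z_k ∈ {0,1} for k ∈ K such that Σ_{k∈K} z_k = 1, Σ_{k∈K} x_k = x, −M z_k ≤ (x_k)_j ≤ M z_k for all k and j, and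 A_k x_k ≤ z_k β_k for all k. -/
open Matrix BigOperators

/-- Big-M reformulation of a union of polytopes. Let `K` be a finite
nonempty index set, `F_k = {x : A_k x ≤ β_k}`, and `M > 0` bound the sup-norm of every
point of `⋃_k F_k`. Then `x ∈ ⋃_k F_k` iff there exist vectors `x_k` and binaries
`z_k ∈ {0,1}` with `Σ z_k = 1`, `Σ x_k = x`, `-M z_k ≤ x_k ≤ M z_k` componentwise and
`A_k x_k ≤ z_k β_k` for all `k`. -/
theorem union_polytopes_bigM_reformulation {n : ℕ} {K : Type*} [Fintype K] [Nonempty K]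
    {m : K → ℕ} (A : (k : K) → Matrix (Fin (m k)) (Fin n) ℝ)
    (β : (k : K) → Fin (m k) → ℝ) (M : ℝ) (hM : 0 < M)
    (hbound : ∀ k, ∀ x : Fin n → ℝ, (∀ i, (A k).mulVec x i ≤ β k i) → ∀ j, |x j| ≤ M)
    (x : Fin n → ℝ) :
    (∃ k, ∀ i, (A k).mulVec x i ≤ β k i) ↔
      ∃ xk : K → Fin n → ℝ, ∃ zk : K → ℝ,
        (∀ k, zk k = 0 ∨ zk k = 1) ∧
        (∑ k, zk k) = 1 ∧
        (∑ k, xk k) = x ∧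
        (∀ k, ∀ j, -(M * zk k) ≤ xk k j ∧ xk k j ≤ M * zk k) ∧
        (∀ k, ∀ i, (A k).mulVec (xk k) i ≤ zk k * β k i) := by
  classical
  constructor
  · rintro ⟨k₀, hk₀⟩
    refine ⟨fun k => if k = k₀ then x else 0, fun k => if k = k₀ then 1 else 0, ?_, ?_, ?_, ?_, ?_⟩
    · intro k; by_cases h : k = k₀ <;> simp [h]
    · simp
    · simp [Finset.sum_ite_eq']
    · intro k j
      by_cases h : k = k₀
      · simp only [if_pos h, mul_one]
        have hb := hbound k₀ x hk₀ j
        constructor <;> [linarith [neg_abs_le (x j)]; linarith [le_abs_self (x j)]]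
      · simp [h]
    · intro k i
      by_cases h : k = k₀
      · subst h; simpa using hk₀ i
      · simp [h, Matrix.mulVec_zero]
  · rintro ⟨xk, zk, hz01, hzsum, hxsum, hbnd, hAx⟩
    have hznn : ∀ k, 0 ≤ zk k := fun k => by rcases hz01 k with h | h <;> simp [h]
    obtain ⟨k₀, hk₀⟩ : ∃ k₀, zk k₀ = 1 := by
      by_contra h
      push_neg at h
      have : ∀ k, zk k = 0 := fun k => (hz01 k).resolve_right (h k)
      simp [this] at hzsum
    have hzero : ∀ k, k ≠ k₀ → zk k = 0 := by
      intro k hk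
      by_contra h
      have hk1 : zk k = 1 := (hz01 k).resolve_left h
      have : (1:ℝ) + 1 ≤ ∑ j, zk j := by
        calc (1:ℝ) + 1 = zk k + zk k₀ := by rw [hk1, hk₀]
        _ = ∑ j ∈ {k, k₀}, zk j := by rw [Finset.sum_pair hk]
        _ ≤ ∑ j, zk j := Finset.sum_le_sum_of_subset_of_nonneg (Finset.subset_univ _) (fun j _ _ => hznn j)
      rw [hzsum] at this; linarith
    have hxk0 : ∀ k, k ≠ k₀ → xk k = 0 := by
      intro k hk
      funext j
      have hb := hbnd k j
      rw [hzero k hk] at hb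
      simp only [mul_zero, neg_zero] at hb
      simp only [Pi.zero_apply]
      linarith [hb.1, hb.2]
    have hx : x = xk k₀ := by
      rw [← hxsum]
      rw [Finset.sum_eq_single k₀]
      · intro b _ hb; exact hxk0 b hb
      · intro h; exact absurd (Finset.mem_univ k₀) h
    refine ⟨k₀, fun i => ?_⟩
    have := hAx k₀ i
    rw [hk₀, one_mul] at this
    rwa [hx]
end
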